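/- Let n be a positive integer with n ≡ 1 (mod 4) and suppose n - 2 = p·t where p is an odd prime, t is a positive integer with gcd(p, t) = 1, and p does not divide Σ_{i=1}^{p-1} 2^{p-1-i}·i!. Then the p-adic valuation of the integer n!·𝔈_n(-n) equals 1; in particular, n!·𝔈_n(-n) is not a square of a rational number. -/

import Mathlib

open Polynomial Finset

/-- `𝔈ₙ(x) = xⁿ/n! + 2·∑_{i=0}^{n-1} xⁱ/i!` as a polynomial over `ℚ`. -/
noncomputable def E (n : ℕ) : Polynomial ℚ :=
  C ((1 : ℚ) / n.factorial) * X ^ n +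
    C 2 * ∑ i ∈ Finset.range n, C ((1 : ℚ) / i.factorial) * X ^ i

/-!
Put `T_m(x) = m! ∑_{i ≤ m} xⁱ/i!`, so that `n! 𝔈_n(x) = 2 T_n(x) - xⁿ` and
`T_{m+1}(x) = x^{m+1} + (m+1) T_m(x)`. For odd `n`, unrolling this recursion three times at
`x = -n` gives `n! 𝔈_n(-n) = (n - 2) C` with `C = 2n(n-1) T_{n-3}(-n) - n^{n-1}`, so with
`n - 2 = p t` it remains to see `p ∤ t C`.

Modulo `p` we have `n ≡ 2`. The recursion gives `T_{kp+r}(x) ≡ x^{kp} T_r(x)`, and reflecting the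
sum with `(p-1)(p-2)⋯(p-k) ≡ (-1)^k k!` gives `T_{p-1}(-2) ≡ ∑_{k<p} k! 2^{p-1-k} = 1 + S`, where
`S` is the sum in the hypothesis. As `t` is odd, Fermat's little theorem then yields
`C ≡ 2^{t+1} S ≢ 0`.
-/

/-- `m! · ∑_{i ≤ m} xⁱ / i!`, written as a recursion so that it makes sense over any semiring. -/
def factorialExpTaylor {R : Type*} [Semiring R] : ℕ → R → R
  | 0, _ => 1
  | m + 1, x => x ^ (m + 1) + (m + 1) * factorialExpTaylor m x

/-- The cofactor of `n - 2` in `n! 𝔈_n(-n)` for odd `n = m + 3`. -/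
def factorialExpTaylorCofactor {R : Type*} [Ring R] (m : ℕ) : R :=
  2 * (m + 3) * (m + 2) * factorialExpTaylor m (-(m + 3 : R)) - (m + 3) ^ (m + 2)

section

variable {R : Type*}

@[simp]
lemma factorialExpTaylor_zero [Semiring R] (x : R) : factorialExpTaylor 0 x = 1 := rfl

lemma factorialExpTaylor_succ [Semiring R] (m : ℕ) (x : R) :
    factorialExpTaylor (m + 1) x = x ^ (m + 1) + (m + 1) * factorialExpTaylor m x := rfl

@[simp, norm_cast]
lemma Int.cast_factorialExpTaylor [Ring R] (m : ℕ) (x : ℤ) :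
    ((factorialExpTaylor m x : ℤ) : R) = factorialExpTaylor m (x : R) := by
  induction m with
  | zero => simp
  | succ m ih => simp [factorialExpTaylor_succ, ih]

@[simp, norm_cast]
lemma Int.cast_factorialExpTaylorCofactor [Ring R] (m : ℕ) :
    ((factorialExpTaylorCofactor m : ℤ) : R) = factorialExpTaylorCofactor m := by
  simp [factorialExpTaylorCofactor]

lemma factorialExpTaylor_eq_factorial_mul_sum [Field R] [CharZero R] (m : ℕ) (x : R) :
    factorialExpTaylor m x = m.factorial * ∑ i ∈ range (m + 1), x ^ i / i.factorial := by
  induction m with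
  | zero => simp
  | succ m ih =>
    rw [factorialExpTaylor_succ, ih, sum_range_succ _ (m + 1), Nat.factorial_succ]
    have : (m.factorial : R) ≠ 0 := Nat.cast_ne_zero.mpr m.factorial_ne_zero
    push_cast
    field_simp
    ring

lemma factorialExpTaylor_eq_sum_descFactorial [CommSemiring R] (m : ℕ) (x : R) :
    factorialExpTaylor m x = ∑ k ∈ range (m + 1), (m.descFactorial k : R) * x ^ (m - k) := by
  induction m with
  | zero => simp
  | succ m ih =>
    rw [factorialExpTaylor_succ, ih, sum_range_succ' _ (m + 1), mul_sum]
    simp only [Nat.succ_descFactorial_succ, Nat.descFactorial_zero, Nat.sub_zero]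
    push_cast
    rw [add_comm]
    congr 1
    · exact sum_congr rfl fun k _ => by ring
    · simp

/-- The coefficient `k * p` vanishes, so the recursion restarts at index `k * p`. -/
lemma factorialExpTaylor_mul_add_of_charP [CommSemiring R] (p : ℕ) [CharP R p] (k r : ℕ)
    (x : R) : factorialExpTaylor (k * p + r) x = x ^ (k * p) * factorialExpTaylor r x := by
  induction r with
  | zero =>
    rw [add_zero]
    cases h : k * p with
    | zero => simp
    | succ j =>
      have hj : ((j + 1 : ℕ) : R) = 0 := by rw [← h]; simp
      push_cast at hj
      simp [factorialExpTaylor_succ, hj]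
  | succ r ih =>
    rw [← add_assoc, factorialExpTaylor_succ, ih, factorialExpTaylor_succ]
    have : ((k * p + r : ℕ) : R) = r := by simp
    rw [this]
    ring

lemma Nat.cast_descFactorial_pred_of_charP [CommRing R] (p : ℕ) [CharP R p] {k : ℕ}
    (hk : k < p) : ((p - 1).descFactorial k : R) = (-1) ^ k * k.factorial := by
  have hterm : ∀ i ∈ range k, ((p - 1 - i : ℕ) : R) = -1 * ((i + 1 : ℕ) : R) := by
    intro i hi
    have hsum : ((p - 1 - i : ℕ) : R) + ((i + 1 : ℕ) : R) = 0 := by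
      rw [← Nat.cast_add, show p - 1 - i + (i + 1) = p by simp at hi; omega, CharP.cast_eq_zero]
    linear_combination hsum
  rw [Nat.descFactorial_eq_prod_range, Nat.cast_prod, prod_congr rfl hterm, prod_mul_distrib,
    prod_const, card_range, ← Nat.cast_prod, prod_range_add_one_eq_factorial]

/-- For odd `n = m + 3`, the top three terms of `2 T_n(-n)` and the term `-(-n)ⁿ = nⁿ` add up
to `-(n - 2) n^{n-1}`. -/
lemma two_mul_factorialExpTaylor_sub_pow_of_even [CommRing R] {m : ℕ} (hm : Even m) :
    2 * factorialExpTaylor (m + 3) (-(m + 3 : R)) - (-(m + 3 : R)) ^ (m + 3) =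
      (m + 1) * factorialExpTaylorCofactor m := by
  have hpow : ∀ k, (-(m + 3 : R)) ^ (m + k) = (m + 3) ^ m * (-(m + 3)) ^ k := fun k => by
    rw [pow_add, hm.neg_pow]
  simp only [factorialExpTaylorCofactor, factorialExpTaylor_succ, add_assoc, hpow, Nat.cast_add,
    Nat.cast_ofNat, Nat.cast_one]
  ring

end

lemma factorial_mul_eval_E (n : ℕ) (x : ℚ) :
    n.factorial * (E n).eval x = 2 * factorialExpTaylor n x - x ^ n := by
  rw [factorialExpTaylor_eq_factorial_mul_sum, sum_range_succ]
  simp only [E, eval_add, eval_mul, eval_C, eval_pow, eval_X, eval_finsetSum]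
  have : (n.factorial : ℚ) ≠ 0 := by positivity
  field_simp
  ring

lemma factorial_mul_eval_E_neg_of_even {m : ℕ} (hm : Even m) :
    ((m + 3).factorial : ℚ) * (E (m + 3)).eval (-((m + 3 : ℕ) : ℚ)) =
      (((m + 1 : ℕ) * factorialExpTaylorCofactor m : ℤ) : ℚ) := by
  rw [factorial_mul_eval_E]
  push_cast
  exact two_mul_factorialExpTaylor_sub_pow_of_even hm

section ZModPrime

variable (p : ℕ) [Fact p.Prime]

lemma factorialExpTaylor_mul_add_pred (s : ℕ) (x : ZMod p) :
    factorialExpTaylor (s * p + (p - 1)) x = x ^ s * factorialExpTaylor (p - 1) x := by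
  rw [factorialExpTaylor_mul_add_of_charP p, mul_comm s, pow_mul, ZMod.pow_card]

lemma factorialExpTaylor_pred_neg (y : ZMod p) :
    factorialExpTaylor (p - 1) (-y) =
      ∑ k ∈ range p, (k.factorial : ZMod p) * y ^ (p - 1 - k) := by
  rw [factorialExpTaylor_eq_sum_descFactorial, Nat.sub_add_cancel (Fact.out : p.Prime).one_le]
  refine sum_congr rfl fun k hk => ?_
  have hk : k < p := mem_range.mp hk
  have hsign : (-1 : ZMod p) ^ k * (-1) ^ (p - 1 - k) = 1 := by
    rw [← pow_add, Nat.add_sub_cancel' (by omega)]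
    exact ZMod.pow_card_sub_one_eq_one (neg_ne_zero.mpr one_ne_zero)
  rw [Nat.cast_descFactorial_pred_of_charP p hk, neg_eq_neg_one_mul y, mul_pow]
  linear_combination (k.factorial * y ^ (p - 1 - k)) * hsign

variable {p}

lemma factorialExpTaylor_pred_neg_two (hp : p ≠ 2) :
    factorialExpTaylor (p - 1) (-2 : ZMod p) =
      1 + ((∑ i ∈ Icc 1 (p - 1), 2 ^ (p - 1 - i) * i.factorial : ℕ) : ZMod p) := by
  have hp1 : 1 ≤ p := (Fact.out : p.Prime).one_le
  have htwo : (2 : ZMod p) ≠ 0 := Ring.two_ne_zero (by rwa [ZMod.ringChar_zmod_n])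
  rw [factorialExpTaylor_pred_neg, range_eq_Ico, sum_eq_sum_Ico_succ_bot hp1,
    Nat.factorial_zero, Nat.cast_one, one_mul, Nat.sub_zero, ZMod.pow_card_sub_one_eq_one htwo,
    ← Ico_add_one_right_eq_Icc, Nat.sub_add_cancel hp1]
  push_cast
  exact congrArg _ (sum_congr rfl fun i _ => mul_comm _ _)

lemma factorialExpTaylorCofactor_mul_add_pred (hp : p ≠ 2) {s : ℕ} (hs : Even s) :
    factorialExpTaylorCofactor (s * p + (p - 1)) = (2 : ZMod p) ^ (s + 2) *
      ((∑ i ∈ Icc 1 (p - 1), 2 ^ (p - 1 - i) * i.factorial : ℕ) : ZMod p) := by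
  have hp1 : 1 ≤ p := (Fact.out : p.Prime).one_le
  have hcast : ((s * p + (p - 1) : ℕ) : ZMod p) = -1 := by
    rw [Nat.cast_add, Nat.cast_mul, Nat.cast_sub hp1, ZMod.natCast_self]
    ring
  have hpow : (2 : ZMod p) ^ (s * p + (p - 1) + 2) = 2 ^ (s + 2) := by
    rw [show s * p + (p - 1) + 2 = (s + 1) * p + 1 by rw [add_mul, one_mul]; omega, pow_succ,
      pow_mul, ZMod.pow_card]
    ring
  rw [factorialExpTaylorCofactor, hcast, show (-1 + 3 : ZMod p) = 2 by ring,
    show (-1 + 2 : ZMod p) = 1 by ring, factorialExpTaylor_mul_add_pred,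
    factorialExpTaylor_pred_neg_two hp, hs.neg_pow, hpow]
  ring

end ZModPrime

lemma padicValRat_natCast_mul_of_not_dvd (p : ℕ) [Fact p.Prime] {b : ℤ} (hb : ¬ (p : ℤ) ∣ b) :
    padicValRat p ((p * b : ℤ) : ℚ) = 1 := by
  have hp : (p : ℤ) ≠ 0 := by exact_mod_cast (Fact.out : p.Prime).ne_zero
  rw [padicValRat.of_int, padicValInt.mul hp (by rintro rfl; exact hb (dvd_zero _)),
    padicValInt.self (Fact.out : p.Prime).one_lt, padicValInt.eq_zero_of_not_dvd hb]
  rfl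

lemma not_exists_sq_of_padicValRat_eq_one (p : ℕ) [Fact p.Prime] {r : ℚ}
    (hr : padicValRat p r = 1) : ¬ ∃ q : ℚ, r = q ^ 2 := by
  rintro ⟨q, rfl⟩
  rw [padicValRat.pow] at hr
  omega

theorem padicValRat_factorial_mul_E_eval_neg_n_general (n p t : ℕ)
    (h1 : n % 4 = 1) (hp : p.Prime) (hpodd : Odd p) (ht : 0 < t)
    (hnt : n - 2 = p * t) (hco : Nat.Coprime p t)
    (hnd : ¬ p ∣ ∑ i ∈ Finset.Icc 1 (p - 1), 2 ^ (p - 1 - i) * i.factorial) :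
    padicValRat p ((n.factorial : ℚ) * (E n).eval (-(n : ℚ))) = 1 ∧
    ¬ ∃ q : ℚ, (n.factorial : ℚ) * (E n).eval (-(n : ℚ)) = q ^ 2 := by
  have : Fact p.Prime := ⟨hp⟩
  have hp2 : p ≠ 2 := by rintro rfl; exact Nat.not_odd_iff_even.mpr even_two hpodd
  obtain ⟨s, rfl⟩ : ∃ s, t = s + 1 := ⟨t - 1, by omega⟩
  have hps : p * (s + 1) = s * p + p := by ring
  have hp3 : 3 ≤ p := by have := hp.two_le; omega
  obtain ⟨m, rfl⟩ : ∃ m, n = m + 3 := ⟨n - 3, by omega⟩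
  have hm : m = s * p + (p - 1) := by omega
  have hs : Even s := by
    have : Odd (p * (s + 1)) := Nat.odd_iff.mpr (by omega)
    simpa [Nat.odd_add_one] using (Nat.odd_mul.mp this).2
  have hA : ((m + 3).factorial : ℚ) * (E (m + 3)).eval (-((m + 3 : ℕ) : ℚ)) =
      ((p * ((s + 1 : ℕ) * factorialExpTaylorCofactor m) : ℤ) : ℚ) := by
    rw [factorial_mul_eval_E_neg_of_even (Nat.even_iff.mpr (by omega)),
      show m + 1 = p * (s + 1) by omega]
    push_cast
    ring
  have hB : ¬ (p : ℤ) ∣ (s + 1 : ℕ) * factorialExpTaylorCofactor m := by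
    have hs1 := (ZMod.natCast_eq_zero_iff (s + 1) p).not.mpr (hp.coprime_iff_not_dvd.mp hco)
    have hS := (ZMod.natCast_eq_zero_iff _ p).not.mpr hnd
    have htwo : (2 : ZMod p) ≠ 0 := Ring.two_ne_zero (by rwa [ZMod.ringChar_zmod_n])
    rw [← ZMod.intCast_zmod_eq_zero_iff_dvd]
    push_cast [hm, factorialExpTaylorCofactor_mul_add_pred hp2 hs] at hs1 hS ⊢
    exact mul_ne_zero hs1 (mul_ne_zero (pow_ne_zero _ htwo) hS)
  have hval := hA ▸ padicValRat_natCast_mul_of_not_dvd p hB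
  exact ⟨hval, not_exists_sq_of_padicValRat_eq_one p hval⟩

/-- Let `n ≡ 1 (mod 4)` with `n - 2 = p·t`, `p` an odd prime, `t` a positive
integer coprime to `p`, and `p ∤ ∑_{i=1}^{p-1} 2^{p-1-i}·i!`.  Then the `p`-adic
valuation of the integer `n!·𝔈ₙ(-n)` equals `1`; in particular `n!·𝔈ₙ(-n)` is
not the square of a rational number. -/
theorem padicValRat_factorial_mul_E_eval_neg_n (n p t : ℕ) (hn : 0 < n)
    (h1 : n % 4 = 1) (hp : p.Prime) (hpodd : Odd p) (ht : 0 < t)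
    (hnt : n - 2 = p * t) (hco : Nat.Coprime p t)
    (hnd : ¬ p ∣ ∑ i ∈ Finset.Icc 1 (p - 1), 2 ^ (p - 1 - i) * i.factorial) :
    padicValRat p ((n.factorial : ℚ) * (E n).eval (-(n : ℚ))) = 1 ∧
    ¬ ∃ q : ℚ, (n.factorial : ℚ) * (E n).eval (-(n : ℚ)) = q ^ 2 :=
  padicValRat_factorial_mul_E_eval_neg_n_general n p t h1 hp hpodd ht hnt hco hnd
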